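/- For a loopless matroid M of rank r on [n] and a nonzero rational d, the following identity holds: d^r |μ(M)| = Σ_{F flat of M} D(M|F, d) · |μ(M/F)|, where D(N, d) := d^{rk N} T_N(1 − 1/d, 0) and |μ(N)| = (−1)^{rk N} χ_N(0). -/
import Mathlib


open Finset

structure FinMatroid (α : Type*) [DecidableEq α] where
  E : Finset α
  rk : Finset α → ℕ
  rk_le_card : ∀ S, rk S ≤ S.card
  rk_mono : ∀ ⦃S T : Finset α⦄, S ⊆ T → rk S ≤ rk T
  rk_submod : ∀ S T, rk (S ∪ T) + rk (S ∩ T) ≤ rk S + rk T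
  rk_inter_ground : ∀ S, rk (S ∩ E) = rk S

variable {α : Type*} [DecidableEq α]

/-- `M` is loopless: every element of the ground set has rank 1. -/
def FinMatroid.Loopless (M : FinMatroid α) : Prop := ∀ e ∈ M.E, M.rk {e} = 1

/-- Flats of the matroid `M`. -/
def FinMatroid.IsFlat (M : FinMatroid α) (F : Finset α) : Prop :=
  F ⊆ M.E ∧ ∀ e ∈ M.E, e ∉ F → M.rk F < M.rk (insert e F)

/-- The Tutte polynomial (corank-nullity sum) of the rank function `rk` on ground set `E`,
evaluated at `(x, y)`. -/
def tutteSum (E : Finset α) (rk : Finset α → ℕ) (x y : ℚ) : ℚ :=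
  ∑ S ∈ E.powerset, (x - 1) ^ (rk E - rk S) * (y - 1) ^ (S.card - rk S)

/-- The characteristic polynomial of the rank function `rk` on ground set `E`, evaluated at `t`. -/
def charSum (E : Finset α) (rk : Finset α → ℕ) (t : ℚ) : ℚ :=
  ∑ S ∈ E.powerset, (-1 : ℚ) ^ S.card * t ^ (rk E - rk S)

/-! ### Auxiliary lemmas -/

lemma neg_one_pow_sub_q (a b : ℕ) (h : b ≤ a) :
    ((-1 : ℚ)) ^ (a - b) = (-1) ^ a * (-1) ^ b := by
  have h1 : ((-1 : ℚ)) ^ (a - b) * (-1) ^ b = (-1) ^ a := by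
    rw [← pow_add, Nat.sub_add_cancel h]
  have h2 : ((-1 : ℚ)) ^ b * (-1) ^ b = 1 := by
    rw [← mul_pow]; norm_num
  calc ((-1 : ℚ)) ^ (a - b) = (-1) ^ (a - b) * ((-1) ^ b * (-1) ^ b) := by rw [h2, mul_one]
    _ = (-1) ^ a * (-1) ^ b := by rw [← mul_assoc, h1]

lemma sum_pow_neg_one_q (s : Finset α) :
    ∑ t ∈ s.powerset, (-1 : ℚ) ^ t.card = if s = ∅ then 1 else 0 := by
  induction s using Finset.induction_on with
  | empty => simp
  | @insert a s ha ih =>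
    rw [Finset.sum_powerset_insert ha, ih]
    have h1 : ∀ t ∈ s.powerset, (-1 : ℚ) ^ (insert a t).card = -(-1 : ℚ) ^ t.card := by
      intro t ht
      rw [Finset.card_insert_of_notMem (fun hat => ha (Finset.mem_powerset.1 ht hat)), pow_succ]
      ring
    rw [Finset.sum_congr rfl h1, Finset.sum_neg_distrib, ih]
    simp [Finset.insert_ne_empty]

/-- Key cancellation: summing over a subset `A` of `E` and a subset `T` of `E \ A` with sign
`(-1)^|T|`, a function of `A ∪ T` collapses to its value at `∅`. -/
lemma sum_sdiff_powerset (E : Finset α) (f : Finset α → ℚ) :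
    ∑ A ∈ E.powerset, ∑ T ∈ (E \ A).powerset, (-1 : ℚ) ^ T.card * f (A ∪ T) = f ∅ := by
  have key : ∑ A ∈ E.powerset, ∑ T ∈ (E \ A).powerset, (-1 : ℚ) ^ T.card * f (A ∪ T)
      = ∑ U ∈ E.powerset, ∑ T ∈ U.powerset, (-1 : ℚ) ^ T.card * f U := by
    rw [Finset.sum_sigma', Finset.sum_sigma']
    refine Finset.sum_nbij' (fun p => ⟨p.1 ∪ p.2, p.2⟩) (fun q => ⟨q.1 \ q.2, q.2⟩)
      ?_ ?_ ?_ ?_ ?_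
    · rintro ⟨A, T⟩ h
      rw [Finset.mem_sigma] at h ⊢
      obtain ⟨hA, hT⟩ := h
      rw [Finset.mem_powerset] at hA hT ⊢
      constructor
      · exact Finset.union_subset hA (hT.trans (Finset.sdiff_subset))
      · rw [Finset.mem_powerset]; exact Finset.subset_union_right
    · rintro ⟨U, T⟩ h
      rw [Finset.mem_sigma] at h ⊢
      obtain ⟨hU, hT⟩ := h
      rw [Finset.mem_powerset] at hU hT ⊢
      constructor
      · exact (Finset.sdiff_subset).trans hU
      · rw [Finset.mem_powerset]
        intro x hx
        rw [Finset.mem_sdiff]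
        exact ⟨hU (hT hx), fun hx' => (Finset.mem_sdiff.1 hx').2 hx⟩
    · rintro ⟨A, T⟩ h
      rw [Finset.mem_sigma, Finset.mem_powerset, Finset.mem_powerset] at h
      have : (A ∪ T) \ T = A := by
        ext x
        simp only [Finset.mem_sdiff, Finset.mem_union]
        constructor
        · rintro ⟨hx | hx, hx'⟩
          · exact hx
          · exact absurd hx hx'
        · intro hx
          exact ⟨Or.inl hx, fun hx' => (Finset.mem_sdiff.1 (h.2 hx')).2 hx⟩
      simp [this]
    · rintro ⟨U, T⟩ h
      rw [Finset.mem_sigma, Finset.mem_powerset, Finset.mem_powerset] at h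
      have : U \ T ∪ T = U := by
        ext x
        simp only [Finset.mem_union, Finset.mem_sdiff]
        constructor
        · rintro (⟨hx, _⟩ | hx)
          · exact hx
          · exact h.2 hx
        · intro hx
          by_cases hxT : x ∈ T
          · exact Or.inr hxT
          · exact Or.inl ⟨hx, hxT⟩
      simp [this]
    · rintro ⟨A, T⟩ h
      simp
  rw [key]
  have key2 : ∀ U ∈ E.powerset, ∑ T ∈ U.powerset, (-1 : ℚ) ^ T.card * f U
      = if U = ∅ then f U else 0 := by
    intro U _
    rw [← Finset.sum_mul, sum_pow_neg_one_q, ite_mul, one_mul, zero_mul]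
  rw [Finset.sum_congr rfl key2]
  rw [Finset.sum_ite_eq' E.powerset ∅ f]
  simp

lemma sum_filter_superset (E S : Finset α) (hS : S ⊆ E) (g : Finset α → ℚ) :
    ∑ A ∈ E.powerset.filter (fun A => S ⊆ A), g A = ∑ B ∈ (E \ S).powerset, g (S ∪ B) := by
  refine Finset.sum_nbij' (fun A => A \ S) (fun B => S ∪ B) ?_ ?_ ?_ ?_ ?_
  · intro A hA
    rw [Finset.mem_filter, Finset.mem_powerset] at hA
    rw [Finset.mem_powerset]
    exact Finset.sdiff_subset_sdiff hA.1 (le_refl S)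
  · intro B hB
    rw [Finset.mem_powerset] at hB
    rw [Finset.mem_filter, Finset.mem_powerset]
    exact ⟨Finset.union_subset hS (hB.trans Finset.sdiff_subset), Finset.subset_union_left⟩
  · intro A hA
    rw [Finset.mem_filter] at hA
    exact Finset.union_sdiff_of_subset hA.2
  · intro B hB
    rw [Finset.mem_powerset] at hB
    ext x
    simp only [Finset.mem_sdiff, Finset.mem_union]
    constructor
    · rintro ⟨hx | hx, hx'⟩
      · exact absurd hx hx'
      · exact hx
    · intro hx
      exact ⟨Or.inr hx, fun hx' => (Finset.mem_sdiff.1 (hB hx)).2 hx'⟩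
  · intro A hA
    rw [Finset.mem_filter] at hA
    rw [Finset.union_sdiff_of_subset hA.2]

lemma step2 (E S : Finset α) (hS : S ⊆ E) (e : Finset α → ℚ) :
    ∑ A ∈ E.powerset.filter (fun A => S ⊆ A),
        ∑ T ∈ (E \ A).powerset, (-1 : ℚ) ^ T.card * e (A ∪ T) = e S := by
  rw [sum_filter_superset E S hS]
  have hcong : ∀ B ∈ (E \ S).powerset,
      (∑ T ∈ (E \ (S ∪ B)).powerset, (-1 : ℚ) ^ T.card * e ((S ∪ B) ∪ T))
      = ∑ T ∈ ((E \ S) \ B).powerset, (-1 : ℚ) ^ T.card * e (S ∪ (B ∪ T)) := by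
    intro B _
    have h1 : E \ (S ∪ B) = (E \ S) \ B := by
      ext x; simp only [Finset.mem_sdiff, Finset.mem_union]; tauto
    rw [h1]
    refine Finset.sum_congr rfl fun T _ => ?_
    rw [Finset.union_assoc]
  rw [Finset.sum_congr rfl hcong, sum_sdiff_powerset (E \ S) (fun X => e (S ∪ X))]
  simp

/-- If `A ⊆ E` is not a flat, the characteristic sum of the contraction vanishes. -/
lemma charSum_contract_eq_zero (M : FinMatroid α) (A : Finset α)
    (e : α) (heA : e ∈ M.E \ A) (hrk : M.rk (insert e A) = M.rk A) :
    charSum (M.E \ A) (fun S => M.rk (S ∪ A) - M.rk A) 0 = 0 := by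
  classical
  set E' := M.E \ A with hE'
  have heE' : e ∈ E' := heA
  have hins : E' = insert e (E'.erase e) := (Finset.insert_erase heE').symm
  -- rank is unchanged by inserting e over any set containing A
  have hrkins : ∀ S : Finset α, e ∉ S → M.rk (insert e S ∪ A) = M.rk (S ∪ A) := by
    intro S heS
    have heA' : e ∉ A := (Finset.mem_sdiff.1 heA).2
    have h1 : (S ∪ A) ∪ insert e A = insert e (S ∪ A) := by
      ext x
      simp only [Finset.mem_union, Finset.mem_insert]
      tauto
    have h2 : (S ∪ A) ∩ insert e A = A := by
      ext x
      simp only [Finset.mem_inter, Finset.mem_union, Finset.mem_insert]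
      constructor
      · rintro ⟨hx, hx' | hx'⟩
        · subst hx'
          rcases hx with hx | hx
          · exact absurd hx heS
          · exact absurd hx heA'
        · exact hx'
      · intro hx
        exact ⟨Or.inr hx, Or.inr hx⟩
    have hsub := M.rk_submod (S ∪ A) (insert e A)
    rw [h1, h2, hrk] at hsub
    have hle : M.rk (insert e (S ∪ A)) ≤ M.rk (S ∪ A) := by omega
    have hge : M.rk (S ∪ A) ≤ M.rk (insert e (S ∪ A)) :=
      M.rk_mono (Finset.subset_insert _ _)
    have : insert e S ∪ A = insert e (S ∪ A) := by
      ext x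
      simp only [Finset.mem_union, Finset.mem_insert]
      tauto
    rw [this]
    omega
  unfold charSum
  rw [hins, Finset.sum_powerset_insert (Finset.notMem_erase e E')]
  rw [← hins]
  have hpair : ∀ S ∈ (E'.erase e).powerset,
      (-1 : ℚ) ^ (insert e S).card * (0:ℚ) ^ (M.rk (E' ∪ A) - M.rk A - (M.rk (insert e S ∪ A) - M.rk A))
      = -((-1 : ℚ) ^ S.card * (0:ℚ) ^ (M.rk (E' ∪ A) - M.rk A - (M.rk (S ∪ A) - M.rk A))) := by
    intro S hS
    have heS : e ∉ S := fun h =>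
      Finset.notMem_erase e E' (Finset.mem_powerset.1 hS h)
    rw [hrkins S heS, Finset.card_insert_of_notMem heS, pow_succ]
    ring
  rw [Finset.sum_congr rfl hpair, Finset.sum_neg_distrib]
  ring

/-- Expansion of `d^{rk A} * T_{M|A}(1 - 1/d, 0)`. -/
lemma tutte_expand (M : FinMatroid α) (A : Finset α) (d : ℚ) (hd : d ≠ 0) :
    d ^ (M.rk A) * tutteSum A M.rk (1 - 1 / d) 0
      = ∑ S ∈ A.powerset, ((-1 : ℚ) ^ (M.rk A) * ((-1) ^ S.card * d ^ (M.rk S))) := by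
  unfold tutteSum
  rw [Finset.mul_sum]
  refine Finset.sum_congr rfl fun S hS => ?_
  have hSA := Finset.mem_powerset.1 hS
  have h1 : M.rk S ≤ M.rk A := M.rk_mono hSA
  have h2 : M.rk S ≤ S.card := M.rk_le_card S
  have hx : (1 - 1 / d - 1 : ℚ) = -(1 / d) := by ring
  have hy : (0 - 1 : ℚ) = -1 := by ring
  rw [hx, hy]
  rw [neg_pow (1/d : ℚ) (M.rk A - M.rk S)]
  rw [neg_one_pow_sub_q _ _ h1, neg_one_pow_sub_q _ _ h2]
  have hds : d ^ (M.rk A) * (1 / d) ^ (M.rk A - M.rk S) = d ^ (M.rk S) := by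
    have hco : M.rk A - (M.rk A - M.rk S) = M.rk S := by omega
    calc d ^ (M.rk A) * (1 / d) ^ (M.rk A - M.rk S)
        = d ^ (M.rk A) * (d ^ (M.rk A - M.rk S))⁻¹ := by rw [one_div, inv_pow]
      _ = d ^ (M.rk A - (M.rk A - M.rk S)) := (pow_sub₀ d hd (Nat.sub_le _ _)).symm
      _ = d ^ (M.rk S) := by rw [hco]
  have hss : ((-1 : ℚ)) ^ (M.rk S) * (-1) ^ (M.rk S) = 1 := by
    rw [← mul_pow]; norm_num
  linear_combination ((-1 : ℚ) ^ (M.rk A) * (-1) ^ S.card *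
      (1 / d) ^ (M.rk A - M.rk S) * d ^ (M.rk A)) * hss +
    ((-1 : ℚ) ^ (M.rk A) * (-1) ^ S.card) * hds

/-- Expansion of the contraction characteristic sum at `0`. -/
lemma char_expand (M : FinMatroid α) (A : Finset α) (hA : A ⊆ M.E) (r : ℕ)
    (hr : M.rk M.E = r) :
    charSum (M.E \ A) (fun S => M.rk (S ∪ A) - M.rk A) 0
      = ∑ T ∈ (M.E \ A).powerset, (-1 : ℚ) ^ T.card * (0 : ℚ) ^ (r - M.rk (A ∪ T)) := by
  unfold charSum
  refine Finset.sum_congr rfl fun T hT => ?_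
  have hT' := Finset.mem_powerset.1 hT
  have hE : (M.E \ A) ∪ A = M.E := by
    rw [Finset.sdiff_union_self_eq_union, Finset.union_eq_left.2 hA]
  have h1 : M.rk A ≤ M.rk (A ∪ T) := M.rk_mono Finset.subset_union_left
  have h2 : M.rk (A ∪ T) ≤ r := by
    rw [← hr]
    exact M.rk_mono (Finset.union_subset hA (hT'.trans Finset.sdiff_subset))
  have hU : T ∪ A = A ∪ T := Finset.union_comm _ _
  have hexp : (fun S => M.rk (S ∪ A) - M.rk A) (M.E \ A) - (fun S => M.rk (S ∪ A) - M.rk A) T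
      = r - M.rk (A ∪ T) := by
    show M.rk (M.E \ A ∪ A) - M.rk A - (M.rk (T ∪ A) - M.rk A) = r - M.rk (A ∪ T)
    rw [hE, hr, hU]
    omega
  rw [hexp]

/-- Per-subset expansion of the right-hand-side summand. -/
lemma term_expand (M : FinMatroid α) (r : ℕ) (hr : M.rk M.E = r) (d : ℚ) (hd : d ≠ 0)
    (A : Finset α) (hA : A ⊆ M.E) :
    (d ^ (M.rk A) * tutteSum A M.rk (1 - 1 / d) 0) *
      ((-1 : ℚ) ^ (r - M.rk A) * charSum (M.E \ A) (fun S => M.rk (S ∪ A) - M.rk A) 0)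
    = ∑ S ∈ A.powerset, ((-1 : ℚ) ^ r * (((-1 : ℚ) ^ S.card * d ^ (M.rk S)) *
        ∑ T ∈ (M.E \ A).powerset, (-1 : ℚ) ^ T.card * (0 : ℚ) ^ (r - M.rk (A ∪ T)))) := by
  rw [tutte_expand M A d hd, char_expand M A hA r hr]
  rw [Finset.sum_mul]
  refine Finset.sum_congr rfl fun S hS => ?_
  have hAr : M.rk A ≤ r := by rw [← hr]; exact M.rk_mono hA
  rw [neg_one_pow_sub_q r (M.rk A) hAr]
  have hss : ((-1 : ℚ)) ^ (M.rk A) * (-1) ^ (M.rk A) = 1 := by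
    rw [← mul_pow]; norm_num
  set X : ℚ := ∑ T ∈ (M.E \ A).powerset, (-1 : ℚ) ^ T.card * (0 : ℚ) ^ (r - M.rk (A ∪ T))
    with hX
  linear_combination ((-1 : ℚ) ^ r * (-1) ^ S.card * d ^ (M.rk S) * X) * hss

open scoped Classical in
/-- for a loopless matroid `M` of rank `r` and a nonzero rational `d`,
`d^r |μ(M)| = ∑_{F flat} D(M|F, d) |μ(M/F)|`, where `D(N,d) = d^{rk N} T_N(1 - 1/d, 0)` and
`|μ(N)| = (-1)^{rk N} χ_N(0)`. Here `M|F` has ground set `F` with `M`'s rank function, and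
`M/F` has ground set `E \ F` with rank function `S ↦ rk(S ∪ F) - rk F`. -/
theorem stmt19 (M : FinMatroid α) (hM : M.Loopless) (r : ℕ) (hr : M.rk M.E = r)
    (d : ℚ) (hd : d ≠ 0) :
    d ^ r * ((-1 : ℚ) ^ r * charSum M.E M.rk 0)
      = ∑ F ∈ M.E.powerset.filter (fun F => M.IsFlat F),
          (d ^ (M.rk F) * tutteSum F M.rk (1 - 1 / d) 0) *
            ((-1 : ℚ) ^ (r - M.rk F)
              * charSum (M.E \ F) (fun S => M.rk (S ∪ F) - M.rk F) 0) := by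
  classical
  -- Step 1: extend the sum from flats to all subsets of the ground set.
  have hext : ∑ F ∈ M.E.powerset.filter (fun F => M.IsFlat F),
          (d ^ (M.rk F) * tutteSum F M.rk (1 - 1 / d) 0) *
            ((-1 : ℚ) ^ (r - M.rk F)
              * charSum (M.E \ F) (fun S => M.rk (S ∪ F) - M.rk F) 0)
      = ∑ F ∈ M.E.powerset,
          (d ^ (M.rk F) * tutteSum F M.rk (1 - 1 / d) 0) *
            ((-1 : ℚ) ^ (r - M.rk F)
              * charSum (M.E \ F) (fun S => M.rk (S ∪ F) - M.rk F) 0) := by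
    refine Finset.sum_filter_of_ne fun F hF hne => ?_
    by_contra hnotflat
    apply hne
    have hFE : F ⊆ M.E := Finset.mem_powerset.1 hF
    have : ∃ e, e ∈ M.E \ F ∧ M.rk (insert e F) = M.rk F := by
      unfold FinMatroid.IsFlat at hnotflat
      push_neg at hnotflat
      obtain ⟨e, he, heF, hle⟩ := hnotflat hFE
      exact ⟨e, Finset.mem_sdiff.2 ⟨he, heF⟩,
        le_antisymm hle (M.rk_mono (Finset.subset_insert _ _))⟩
    obtain ⟨e, heEF, hrke⟩ := this
    rw [charSum_contract_eq_zero M F e heEF hrke]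
    ring
  rw [hext]
  -- Step 2: expand each term as a double sum.
  rw [Finset.sum_congr rfl fun A hA =>
    term_expand M r hr d hd A (Finset.mem_powerset.1 hA)]
  -- Step 3: pull out the sign and swap sums.
  have hswap : ∑ A ∈ M.E.powerset, ∑ S ∈ A.powerset,
        ((-1 : ℚ) ^ r * (((-1 : ℚ) ^ S.card * d ^ (M.rk S)) *
          ∑ T ∈ (M.E \ A).powerset, (-1 : ℚ) ^ T.card * (0 : ℚ) ^ (r - M.rk (A ∪ T))))
      = ∑ S ∈ M.E.powerset, ∑ A ∈ M.E.powerset.filter (fun A => S ⊆ A),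
        ((-1 : ℚ) ^ r * (((-1 : ℚ) ^ S.card * d ^ (M.rk S)) *
          ∑ T ∈ (M.E \ A).powerset, (-1 : ℚ) ^ T.card * (0 : ℚ) ^ (r - M.rk (A ∪ T)))) := by
    refine Finset.sum_comm' fun A S => ?_
    simp only [Finset.mem_powerset, Finset.mem_filter]
    constructor
    · rintro ⟨hA, hS⟩
      exact ⟨⟨hA, hS⟩, hS.trans hA⟩
    · rintro ⟨⟨hA, hS⟩, _⟩
      exact ⟨hA, hS⟩
  rw [hswap]
  -- Step 4: collapse the inner sums via the key cancellation lemma.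
  have hinner : ∀ S ∈ M.E.powerset,
      (∑ A ∈ M.E.powerset.filter (fun A => S ⊆ A),
        ((-1 : ℚ) ^ r * (((-1 : ℚ) ^ S.card * d ^ (M.rk S)) *
          ∑ T ∈ (M.E \ A).powerset, (-1 : ℚ) ^ T.card * (0 : ℚ) ^ (r - M.rk (A ∪ T)))))
      = (-1 : ℚ) ^ r * (((-1 : ℚ) ^ S.card * d ^ (M.rk S)) * (0 : ℚ) ^ (r - M.rk S)) := by
    intro S hS
    have hSE : S ⊆ M.E := Finset.mem_powerset.1 hS
    rw [← Finset.mul_sum, ← Finset.mul_sum]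
    rw [step2 M.E S hSE (fun U => (0 : ℚ) ^ (r - M.rk U))]
  rw [Finset.sum_congr rfl hinner]
  -- Step 5: compare with the left-hand side.
  unfold charSum
  rw [Finset.mul_sum, Finset.mul_sum]
  refine Finset.sum_congr rfl fun S hS => ?_
  have hSE : S ⊆ M.E := Finset.mem_powerset.1 hS
  have hSr : M.rk S ≤ r := by rw [← hr]; exact M.rk_mono hSE
  rw [hr]
  by_cases hcase : M.rk S = r
  · rw [hcase, Nat.sub_self, pow_zero]
    ring
  · have hpos : 0 < r - M.rk S := by omega
    rw [zero_pow (by omega : r - M.rk S ≠ 0)]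
    ring
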